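/- Let G be the group ⟨x_i (i ∈ ℤ) | w(x_i, ..., x_{i+k-1}) = 1 for all i ∈ ℤ⟩, where in the word w the last generator x_k appears exactly once (with exponent ±1). Then for every n ≥ k, the generator x_n lies in the subgroup generated by x_1, ..., x_{k-1}; consequently the subgroup ⟨x_j : j ≥ 1⟩ of G is generated by the finite set {x_1, ..., x_{k-1}}. -/

import Mathlib

/-- The set of relators `w(x_m, x_{m+1}, …, x_{m+k-1})`, one for every `m ∈ ℤ`,
in the free group on generators `{x_i : i ∈ ℤ}`. -/
def shiftRels (k : ℕ) (w : FreeGroup (Fin k)) : Set (FreeGroup ℤ) :=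
  {r | ∃ m : ℤ, r = FreeGroup.lift (fun j : Fin k => FreeGroup.of (m + (j.1 : ℤ))) w}

/-!
The relator `w(x_m, …, x_{m+k-1}) = 1` contains `x_{m+k-1}` exactly once, so it can be solved
for `x_{m+k-1}^{±1}` as a product of `x_m, …, x_{m+k-2}`. Hence a subgroup containing `k - 1`
consecutive generators contains the next one, and by strong induction on `n` the subgroup
generated by `x_1, …, x_{k-1}` contains every `x_n` with `n ≥ 1`.
-/

open PresentedGroup

theorem FreeGroup.mem_of_lift_mem_of_length_filter_eq_one {α G : Type*} [DecidableEq α] [Group G]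
    {H : Subgroup G} {f : α → G} {w : FreeGroup α} {i : α} (hw : lift f w ∈ H)
    (honce : (w.toWord.filter (fun p => p.1 = i)).length = 1) (hf : ∀ j ≠ i, f j ∈ H) :
    f i ∈ H := by
  obtain ⟨x, hx⟩ := List.length_eq_one_iff.1 honce
  obtain ⟨a, c, hdec, ha, hxi, hc⟩ := List.filter_eq_cons_iff.1 hx
  have hxi : x.1 = i := by simpa using hxi
  set g : α × Bool → G := fun p => cond p.2 (f p.1) (f p.1)⁻¹
  have hprod : ∀ l : List (α × Bool), (∀ p ∈ l, ¬decide (p.1 = i)) → (l.map g).prod ∈ H := by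
    refine fun l hl => H.list_prod_mem fun y hy => ?_
    obtain ⟨⟨j, b⟩, hp, rfl⟩ := List.mem_map.1 hy
    have hj : f j ∈ H := hf j (by simpa using hl _ hp)
    cases b
    · exact H.inv_mem hj
    · exact hj
  rw [← mk_toWord (x := w), lift_mk, hdec, List.map_append, List.prod_append, List.map_cons,
    List.prod_cons, H.mul_mem_cancel_left (hprod a ha),
    H.mul_mem_cancel_right (hprod c (List.filter_eq_nil_iff.1 hc))] at hw
  obtain ⟨j, b⟩ := x
  subst hxi
  cases b
  · simpa using hw
  · exact hw

namespace shiftRels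

theorem lift_of_eq_one (k : ℕ) (w : FreeGroup (Fin k)) (m : ℤ) :
    FreeGroup.lift (fun j : Fin k => (of (m + j) : PresentedGroup (shiftRels k w))) w = 1 := by
  rw [← FreeGroup.lift_unique ((PresentedGroup.mk _).comp
    (FreeGroup.lift fun j : Fin k => FreeGroup.of (m + j))) fun _ => by simp [PresentedGroup.of]]
  exact one_of_mem ⟨m, rfl⟩

theorem of_mem_of_preceding_mem {k : ℕ} (hk : 1 ≤ k) {w : FreeGroup (Fin k)}
    (honce : (w.toWord.filter (fun p => p.1 = (⟨k - 1, by omega⟩ : Fin k))).length = 1)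
    {H : Subgroup (PresentedGroup (shiftRels k w))} {m : ℤ}
    (hH : ∀ j, m ≤ j → j ≤ m + k - 2 → of j ∈ H) : of (m + k - 1) ∈ H := by
  have key := FreeGroup.mem_of_lift_mem_of_length_filter_eq_one
    (f := fun j : Fin k => (of (m + j) : PresentedGroup (shiftRels k w)))
    ((lift_of_eq_one k w m).symm ▸ H.one_mem) honce fun j hj => hH _ (by omega) (by
      have : (j : ℕ) ≠ k - 1 := fun h => hj (Fin.ext h)
      omega)
  convert key using 2
  dsimp only
  omega

theorem of_mem_of_initial_mem {k : ℕ} (hk : 1 ≤ k) {w : FreeGroup (Fin k)}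
    (honce : (w.toWord.filter (fun p => p.1 = (⟨k - 1, by omega⟩ : Fin k))).length = 1)
    {H : Subgroup (PresentedGroup (shiftRels k w))} (hH : ∀ j : ℤ, 1 ≤ j → j ≤ k - 1 → of j ∈ H)
    (n : ℤ) : 1 ≤ n → of n ∈ H := by
  induction n using Int.strongRec (m := k) with
  | lt n hn => exact fun h1 => hH n h1 (by omega)
  | ge n hn ih =>
    intro
    convert of_mem_of_preceding_mem hk honce (m := n - k + 1) fun j h1 h2 =>
      ih j (by omega) (by omega) using 2
    ring

end shiftRels

/-- Let `G = ⟨x_i (i ∈ ℤ) ∣ w(x_i, …, x_{i+k-1}) = 1 ∀ i⟩`, where the last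
generator `x_k` occurs exactly once in `w` (necessarily with exponent `±1`).
Then every generator `x_n` with `n ≥ k` lies in the subgroup generated by
`x_1, …, x_{k-1}`; consequently the subgroup `⟨x_j : j ≥ 1⟩` is generated by the
finite set `{x_1, …, x_{k-1}}`. -/
theorem last_letter_once_finitely_generated (k : ℕ) (hk : 2 ≤ k)
    (w : FreeGroup (Fin k))
    (honce : (w.toWord.filter (fun p => p.1 = (⟨k - 1, by omega⟩ : Fin k))).length = 1) :
    (∀ n : ℤ, (k : ℤ) ≤ n →
      (PresentedGroup.of n : PresentedGroup (shiftRels k w)) ∈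
        Subgroup.closure {g | ∃ j : ℤ, 1 ≤ j ∧ j ≤ (k : ℤ) - 1 ∧
          g = (PresentedGroup.of j : PresentedGroup (shiftRels k w))}) ∧
    Subgroup.closure {g | ∃ j : ℤ, 1 ≤ j ∧
        g = (PresentedGroup.of j : PresentedGroup (shiftRels k w))} =
      Subgroup.closure {g | ∃ j : ℤ, 1 ≤ j ∧ j ≤ (k : ℤ) - 1 ∧
        g = (PresentedGroup.of j : PresentedGroup (shiftRels k w))} := by
  set H := Subgroup.closure {g | ∃ j : ℤ, 1 ≤ j ∧ j ≤ (k : ℤ) - 1 ∧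
    g = (PresentedGroup.of j : PresentedGroup (shiftRels k w))}
  have hall : ∀ n : ℤ, 1 ≤ n → (of n : PresentedGroup (shiftRels k w)) ∈ H :=
    shiftRels.of_mem_of_initial_mem (by omega) honce fun j h1 h2 =>
      Subgroup.subset_closure (by exact ⟨j, h1, h2, rfl⟩)
  refine ⟨fun n hn => hall n (by omega), le_antisymm ?_ (Subgroup.closure_mono ?_)⟩
  · rw [Subgroup.closure_le]
    rintro _ ⟨j, hj, rfl⟩
    exact hall j hj
  · rintro _ ⟨j, hj, -, rfl⟩
    exact ⟨j, hj, rfl⟩
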